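/- For every t ∈ (−1,1), the quantity −(1+t)·α'(t) satisfies 0 < −(1+t)·α'(t) < 1, where α' is the derivative of α. -/

import Mathlib

open Real Set

/-- The smooth extension of `ln(1+t)/(t(2+t))` on `(−1,1)`, with `α(0) = 1/2`. -/
noncomputable def alphaFn (t : ℝ) : ℝ :=
  if t = 0 then 1 / 2 else Real.log (1 + t) / (t * (2 + t))

lemma log_taylor_bound {s : ℝ} (hs : |s| < 1/2) :
    |Real.log (1+s) - (s - s^2/2)| ≤ 2 * |s|^3 := by
  have h1 : |(-s)| < 1 := by rw [abs_neg]; linarith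
  have h := Real.abs_log_sub_add_sum_range_le h1 2
  simp [Finset.sum_range_succ] at h
  have h2 : |s|^3 / (1 - |s|) ≤ 2 * |s|^3 := by
    rw [div_le_iff₀ (by linarith [abs_nonneg s])]
    nlinarith [abs_nonneg s, pow_nonneg (abs_nonneg s) 3]
  calc |Real.log (1+s) - (s - s^2/2)| = |-s + s^2/(1+1) + Real.log (1+s)| := by
        rw [show -s + s^2/(1+1) + Real.log (1+s) = Real.log (1+s) - (s - s^2/2) by ring]
      _ ≤ |s|^3 / (1 - |s|) := h
      _ ≤ 2 * |s|^3 := h2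

lemma hasDerivAt_alphaFn_zero : HasDerivAt alphaFn (-(1/2)) 0 := by
  rw [hasDerivAt_iff_tendsto_slope]
  rw [← tendsto_sub_nhds_zero_iff]
  apply squeeze_zero_norm' (a := fun s => (5/3) * |s|)
  · have hev : ∀ᶠ s in nhdsWithin 0 {(0:ℝ)}ᶜ, s ∈ Set.Ioo (-(1/2):ℝ) (1/2) ∧ s ≠ 0 := by
      filter_upwards [self_mem_nhdsWithin,
        nhdsWithin_le_nhds (Ioo_mem_nhds (show -(1/2) < (0:ℝ) by norm_num) (show (0:ℝ) < 1/2 by norm_num))] with s h1 h2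
      exact ⟨h2, h1⟩
    filter_upwards [hev] with s hs
    obtain ⟨⟨hl, hr⟩, hs0⟩ := hs
    have habs : |s| < 1/2 := abs_lt.2 ⟨hl, hr⟩
    have hE := log_taylor_bound habs
    set E := Real.log (1+s) - (s - s^2/2) with hEdef
    have hlog : Real.log (1+s) = s - s^2/2 + E := by rw [hEdef]; ring
    have h2s : (0:ℝ) < 2 + s := by linarith
    have hslope : slope alphaFn 0 s - (-(1/2)) = (2*E + s^3) / (2*s^2*(2+s)) := by
      rw [slope_def_field, alphaFn, alphaFn, if_neg hs0, if_pos rfl, hlog]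
      field_simp
      ring
    rw [hslope]
    rw [Real.norm_eq_abs, abs_div]
    have hden : |2*s^2*(2+s)| = 2*s^2*(2+s) := abs_of_pos (by positivity)
    rw [hden, div_le_iff₀ (by positivity)]
    have hnum : |2*E + s^3| ≤ 5 * |s|^3 := by
      calc |2*E + s^3| ≤ |2*E| + |s^3| := abs_add_le _ _
        _ = 2*|E| + |s|^3 := by rw [abs_mul, abs_pow]; norm_num
        _ ≤ 2*(2*|s|^3) + |s|^3 := by linarith
        _ = 5*|s|^3 := by ring
    calc |2*E + s^3| ≤ 5*|s|^3 := hnum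
      _ ≤ 5/3 * |s| * (2*s^2*(2+s)) := by
          have h3 : |s|^3 = s^2 * |s| := by rw [pow_succ, sq_abs]
          nlinarith [mul_nonneg (mul_nonneg (sq_nonneg s) (abs_nonneg s)) (show (0:ℝ) ≤ 1+2*s by linarith)]
  · have : Filter.Tendsto (fun s : ℝ => (5/3) * |s|) (nhds 0) (nhds 0) := by
      have := (continuous_abs.tendsto (0:ℝ)).const_mul (5/3 : ℝ)
      simpa using this
    exact this.mono_left nhdsWithin_le_nhds

lemma hasDerivAt_alphaFn_ne_zero {t : ℝ} (ht1 : -1 < t) (ht0 : t ≠ 0) :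
    HasDerivAt alphaFn
      ((1/(1+t) * (t*(2+t)) - Real.log (1+t) * (2+2*t)) / (t*(2+t))^2) t := by
  have h1t : (0:ℝ) < 1 + t := by linarith
  have hlog : HasDerivAt (fun s : ℝ => Real.log (1+s)) (1/(1+t)) t := by
    have h := (Real.hasDerivAt_log (ne_of_gt h1t)).comp t
      ((hasDerivAt_id t).const_add 1)
    simpa [one_div, Function.comp_def] using h
  have hden : HasDerivAt (fun s : ℝ => s*(2+s)) (2+2*t) t := by
    have h : HasDerivAt (fun s : ℝ => s*(2+s)) (1 * (2 + t) + t * 1) t := (hasDerivAt_id' t).mul ((hasDerivAt_id' t).const_add 2)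
    convert h using 1
    ring
  have hne : t*(2+t) ≠ 0 := by
    have : (2:ℝ) + t > 0 := by linarith
    exact mul_ne_zero ht0 (ne_of_gt this)
  have h := hlog.div hden hne
  apply h.congr_of_eventuallyEq
  have hopen : {s : ℝ | s ≠ 0} ∈ nhds t := isOpen_ne.mem_nhds ht0
  filter_upwards [hopen] with s hs
  simp [alphaFn, if_neg hs]

theorem alpha_deriv_bounds (t : ℝ) (ht : t ∈ Set.Ioo (-1 : ℝ) 1) :
    0 < -(1 + t) * deriv alphaFn t ∧ -(1 + t) * deriv alphaFn t < 1 := by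
  obtain ⟨ht1, ht2⟩ := ht
  by_cases ht0 : t = 0
  · subst ht0
    rw [hasDerivAt_alphaFn_zero.deriv]
    norm_num
  · rw [(hasDerivAt_alphaFn_ne_zero ht1 ht0).deriv]
    have h1t : (0:ℝ) < 1 + t := by linarith
    have h2t : (0:ℝ) < 2 + t := by linarith
    set L := Real.log (1+t) with hL
    have hLlt : L < t := by
      have := Real.log_lt_sub_one_of_pos h1t (by intro h; apply ht0; linarith [h] )
      linarith [this]
    have hLgt : t < (1+t) * L := by
      have hinv : (0:ℝ) < 1/(1+t) := by positivity
      have hne1 : 1/(1+t) ≠ 1 := by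
        intro h
        rw [div_eq_one_iff_eq (ne_of_gt h1t)] at h
        apply ht0; linarith
      have := Real.log_lt_sub_one_of_pos hinv hne1
      rw [one_div, Real.log_inv] at this
      have h2 := mul_lt_mul_of_pos_right this h1t
      have h3 : ((1+t)⁻¹ - 1) * (1+t) = -t := by field_simp; ring
      rw [h3] at h2
      nlinarith [h2]
    have hne : t*(2+t) ≠ 0 := mul_ne_zero ht0 (ne_of_gt h2t)
    have hP : 0 < (t*(2+t))^2 := pow_two_pos_of_ne_zero hne
    have hexp : -(1+t) * ((1/(1+t) * (t*(2+t)) - L*(2+2*t)) / (t*(2+t))^2)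
        = (2*(1+t)^2*L - t*(2+t)) / (t*(2+t))^2 := by
      field_simp
      ring
    rw [hexp]
    constructor
    · apply div_pos _ hP
      nlinarith [mul_pos h1t (sub_pos.2 hLgt), sq_nonneg t]
    · rw [div_lt_one hP]
      nlinarith [mul_pos (mul_pos h1t h1t) (sub_pos.2 hLlt), sq_nonneg (t*(1+t))]
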